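/- arXiv:2204.02913 — 3 statements merged into one kernel-verified Lean document; each statement's English description precedes it below -/
import Mathlib

section
/- If S is a finite subset of ℤ \ {0} and Γ(ℤ, S) admits an efficient dominating set (a dominating set such that every integer is dominated by exactly one of its elements), then the domination ratio of Γ(ℤ, S) equals 1/(|S|+1). -/
open Filter

/-- Lower density of a set of integers. -/
noncomputable def lowerDensity (D : Set ℤ) : ℝ :=
  Filter.liminf (fun n : ℕ =>
    ((D ∩ Set.Icc (-(n : ℤ)) (n : ℤ)).ncard : ℝ) / (2 * (n : ℝ) + 1)) Filter.atTop

/-- `D` is a dominating set of the integer distance digraph `Γ(ℤ,S)`. -/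
def Dominating (S D : Set ℤ) : Prop :=
  ∀ m : ℤ, m ∈ D ∨ ∃ u ∈ D, ∃ s ∈ S, m = u + s

/-- Domination ratio of `Γ(ℤ,S)`. -/
noncomputable def dominationRatio (S : Set ℤ) : ℝ :=
  sInf (lowerDensity '' {D : Set ℤ | Dominating S D})

/-- `D` is an efficient dominating set of `Γ(ℤ,S)`: every integer is dominated
by exactly one element of `D`. -/
def EffDominating (S D : Set ℤ) : Prop :=
  ∀ m : ℤ, ∃! u, u ∈ D ∧ (u = m ∨ m - u ∈ S)

/-- The density sequence. -/
noncomputable def fseq (D : Set ℤ) (n : ℕ) : ℝ :=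
  ((D ∩ Set.Icc (-(n : ℤ)) (n : ℤ)).ncard : ℝ) / (2 * (n : ℝ) + 1)

lemma lowerDensity_eq (D : Set ℤ) :
    lowerDensity D = Filter.liminf (fseq D) Filter.atTop := rfl

lemma fseq_nonneg (D : Set ℤ) (n : ℕ) : 0 ≤ fseq D n := by
  unfold fseq
  apply div_nonneg (Nat.cast_nonneg _)
  positivity

lemma fseq_le_one (D : Set ℤ) (n : ℕ) : fseq D n ≤ 1 := by
  unfold fseq
  rw [div_le_one (by positivity)]
  have h1 : (D ∩ Set.Icc (-(n : ℤ)) (n : ℤ)).ncard ≤ (Set.Icc (-(n : ℤ)) (n : ℤ)).ncard :=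
    Set.ncard_le_ncard Set.inter_subset_right (Set.finite_Icc _ _)
  have h2 : (Set.Icc (-(n : ℤ)) (n : ℤ)).ncard = 2 * n + 1 := by
    rw [← Finset.coe_Icc, Set.ncard_coe_finset, Int.card_Icc]
    omega
  rw [h2] at h1
  have : ((D ∩ Set.Icc (-(n : ℤ)) (n : ℤ)).ncard : ℝ) ≤ ((2 * n + 1 : ℕ) : ℝ) := by
    exact_mod_cast h1
  push_cast at this
  linarith

lemma ncard_prod_fin {α β : Type*} (A : Set α) (B : Set β) :
    (A ×ˢ B).ncard = A.ncard * B.ncard := by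
  rw [← Nat.card_coe_set_eq, ← Nat.card_coe_set_eq, ← Nat.card_coe_set_eq,
    Nat.card_congr (Equiv.Set.prod A B), Nat.card_prod]

lemma ncard_Icc_int (a b : ℤ) : (Set.Icc a b).ncard = (b + 1 - a).toNat := by
  rw [← Finset.coe_Icc, Set.ncard_coe_finset, Int.card_Icc]

/-- The limit of the bound sequences. -/
lemma tend_aux (c k : ℝ) (hk : 0 ≤ k) :
    Filter.Tendsto (fun n : ℕ => (2 * (n : ℝ) + c) / ((k + 1) * (2 * (n : ℝ) + 1)))
      Filter.atTop (nhds (1 / (k + 1))) := by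
  have hk1 : (0:ℝ) < k + 1 := by linarith
  have hne : (k + 1) * (2 + 0) ≠ 0 := by nlinarith
  have h1 : Filter.Tendsto (fun n : ℕ => (2 + c / (n : ℝ)) / ((k + 1) * (2 + 1 / (n : ℝ))))
      Filter.atTop (nhds ((2 + 0) / ((k + 1) * (2 + 0)))) :=
    Filter.Tendsto.div
      (tendsto_const_nhds.add (tendsto_const_div_atTop_nhds_zero_nat c))
      (tendsto_const_nhds.mul
        (tendsto_const_nhds.add (tendsto_const_div_atTop_nhds_zero_nat 1))) hne
  have he : (2 + (0:ℝ)) / ((k + 1) * (2 + 0)) = 1 / (k + 1) := by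
    rw [add_zero]
    rw [div_eq_div_iff (by nlinarith) (by nlinarith)]
    ring
  rw [he] at h1
  apply h1.congr'
  filter_upwards [Filter.eventually_ge_atTop 1] with n hn
  have hn0 : (0:ℝ) < (n : ℝ) := by exact_mod_cast hn
  rw [div_eq_div_iff (by positivity) (by positivity)]
  field_simp

section Bounds

variable {S : Set ℤ} (hS : S.Finite) (h0 : 0 ∉ S)

/-- Lower counting bound for dominating sets. -/
lemma low_count (hS : S.Finite) (h0 : 0 ∉ S) {M : ℕ} (hM : ∀ s ∈ S, |s| ≤ (M : ℤ))
    {D : Set ℤ} (hD : Dominating S D) (n : ℕ) :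
    2 * n + 1 ≤ (S.ncard + 1) * (D ∩ Set.Icc (-(((n + M : ℕ)) : ℤ)) ((n + M : ℕ) : ℤ)).ncard := by
  classical
  set T : Set ℤ := insert 0 S with hTdef
  have hT : T.Finite := hS.insert 0
  have hTcard : T.ncard = S.ncard + 1 := Set.ncard_insert_of_notMem h0 hS
  have hTM : ∀ s ∈ T, |s| ≤ (M : ℤ) := by
    rintro s (rfl | hs)
    · simp
    · exact hM s hs
  set A := D ∩ Set.Icc (-(((n + M : ℕ)) : ℤ)) ((n + M : ℕ) : ℤ) with hA
  have hAfin : A.Finite := (Set.finite_Icc _ _).inter_of_right D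
  have hex : ∀ m : ℤ, ∃ u, u ∈ D ∧ m - u ∈ T := by
    intro m
    rcases hD m with hm | ⟨u, hu, s, hs, rfl⟩
    · exact ⟨m, hm, by simp [hTdef]⟩
    · exact ⟨u, hu, by simpa [hTdef] using Or.inr hs⟩
  choose g hg1 hg2 using hex
  have hmaps : ∀ m ∈ Set.Icc (-(n:ℤ)) (n:ℤ), (g m, m - g m) ∈ A ×ˢ T := by
    intro m hm
    simp only [Set.mem_Icc] at hm
    refine Set.mem_prod.mpr ⟨⟨hg1 m, ?_⟩, hg2 m⟩
    have := abs_le.mp (hTM _ (hg2 m))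
    simp only [Set.mem_Icc]
    push_cast
    omega
  have hinj : Set.InjOn (fun m => (g m, m - g m)) (Set.Icc (-(n:ℤ)) (n:ℤ)) := by
    intro a _ b _ hab
    simp only [Prod.mk.injEq] at hab
    omega
  have key := Set.ncard_le_ncard_of_injOn (fun m => (g m, m - g m)) hmaps hinj (hAfin.prod hT)
  rw [ncard_Icc_int, ncard_prod_fin, hTcard] at key
  have h2 : ((n : ℤ) + 1 - -(n:ℤ)).toNat = 2 * n + 1 := by omega
  rw [h2] at key
  exact key.trans_eq (mul_comm _ _)

/-- Upper counting bound for efficient dominating sets. -/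
lemma up_count (hS : S.Finite) (h0 : 0 ∉ S) {M : ℕ} (hM : ∀ s ∈ S, |s| ≤ (M : ℤ))
    {D : Set ℤ} (hD : EffDominating S D) (n : ℕ) :
    (S.ncard + 1) * (D ∩ Set.Icc (-(n:ℤ)) (n:ℤ)).ncard ≤ 2 * (n + M) + 1 := by
  classical
  set T : Set ℤ := insert 0 S with hTdef
  have hT : T.Finite := hS.insert 0
  have hTcard : T.ncard = S.ncard + 1 := Set.ncard_insert_of_notMem h0 hS
  have hTM : ∀ s ∈ T, |s| ≤ (M : ℤ) := by
    rintro s (rfl | hs)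
    · simp
    · exact hM s hs
  set B := D ∩ Set.Icc (-(n:ℤ)) (n:ℤ) with hB
  have hBfin : B.Finite := (Set.finite_Icc _ _).inter_of_right D
  have hmaps : ∀ p ∈ B ×ˢ T, p.1 + p.2 ∈ Set.Icc (-(n:ℤ) - M) ((n:ℤ) + M) := by
    rintro ⟨u, s⟩ hp
    obtain ⟨⟨hu, hu2⟩, hs⟩ := Set.mem_prod.mp hp
    simp only [Set.mem_Icc] at hu2 ⊢
    have := abs_le.mp (hTM _ hs)
    omega
  have hinj : Set.InjOn (fun p : ℤ × ℤ => p.1 + p.2) (B ×ˢ T) := by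
    rintro ⟨u, s⟩ hp ⟨u', s'⟩ hp' hps
    obtain ⟨⟨hu, _⟩, hs⟩ := Set.mem_prod.mp hp
    obtain ⟨⟨hu', _⟩, hs'⟩ := Set.mem_prod.mp hp'
    simp only at hps
    set m := u + s with hm
    obtain ⟨w, _, hwu⟩ := hD m
    have h1 : u ∈ D ∧ (u = m ∨ m - u ∈ S) := by
      refine ⟨hu, ?_⟩
      rcases hs with h | h
      · left; omega
      · right
        have hms : m - u = s := by omega
        rwa [hms]
    have h2 : u' ∈ D ∧ (u' = m ∨ m - u' ∈ S) := by
      refine ⟨hu', ?_⟩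
      rcases hs' with h | h
      · left; omega
      · right
        have hms : m - u' = s' := by omega
        rwa [hms]
    have huu := (hwu u h1).trans (hwu u' h2).symm
    simp only [Prod.mk.injEq]
    omega
  have key := Set.ncard_le_ncard_of_injOn (fun p : ℤ × ℤ => p.1 + p.2) hmaps hinj
    (Set.finite_Icc _ _)
  rw [ncard_Icc_int, ncard_prod_fin, hTcard] at key
  have h2 : ((n:ℤ) + M + 1 - (-(n:ℤ) - M)).toNat = 2 * (n + M) + 1 := by omega
  rw [h2] at key
  exact (mul_comm ((S.ncard) + 1) _).trans_le key

/-- Real-valued lower bound on the density sequence. -/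
lemma fseq_lower (hS : S.Finite) (h0 : 0 ∉ S) {M : ℕ} (hM : ∀ s ∈ S, |s| ≤ (M : ℤ))
    {D : Set ℤ} (hD : Dominating S D) {n : ℕ} (hn : M ≤ n) :
    (2 * (n:ℝ) + (1 - 2 * M)) / (((S.ncard:ℝ) + 1) * (2 * (n:ℝ) + 1)) ≤ fseq D n := by
  have h := low_count hS h0 hM hD (n - M)
  have hnm : (n - M) + M = n := by omega
  rw [hnm] at h
  have hMn : (M:ℝ) ≤ (n:ℝ) := by exact_mod_cast hn
  have hc : 2 * (n:ℝ) + (1 - 2 * M) ≤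
      ((S.ncard:ℝ) + 1) * ((D ∩ Set.Icc (-(n:ℤ)) (n:ℤ)).ncard : ℝ) := by
    have h2 : ((2 * (n - M) + 1 : ℕ) : ℝ) ≤
        (((S.ncard + 1) * (D ∩ Set.Icc (-(n:ℤ)) (n:ℤ)).ncard : ℕ) : ℝ) := by
      exact_mod_cast h
    push_cast [Nat.cast_sub hn] at h2
    linarith
  unfold fseq
  rw [div_le_div_iff₀ (by positivity) (by positivity)]
  have hcard : (0:ℝ) ≤ ((D ∩ Set.Icc (-(n:ℤ)) (n:ℤ)).ncard : ℝ) := Nat.cast_nonneg _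
  nlinarith [Nat.cast_nonneg (α := ℝ) S.ncard]

/-- Real-valued upper bound on the density sequence, for efficient dominating sets. -/
lemma fseq_upper (hS : S.Finite) (h0 : 0 ∉ S) {M : ℕ} (hM : ∀ s ∈ S, |s| ≤ (M : ℤ))
    {D : Set ℤ} (hD : EffDominating S D) (n : ℕ) :
    fseq D n ≤ (2 * (n:ℝ) + (2 * M + 1)) / (((S.ncard:ℝ) + 1) * (2 * (n:ℝ) + 1)) := by
  have h := up_count hS h0 hM hD n
  have hc : ((S.ncard:ℝ) + 1) * ((D ∩ Set.Icc (-(n:ℤ)) (n:ℤ)).ncard : ℝ) ≤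
      2 * (n:ℝ) + (2 * M + 1) := by
    have h2 : (((S.ncard + 1) * (D ∩ Set.Icc (-(n:ℤ)) (n:ℤ)).ncard : ℕ) : ℝ) ≤
        ((2 * (n + M) + 1 : ℕ) : ℝ) := by exact_mod_cast h
    push_cast at h2
    linarith
  unfold fseq
  rw [div_le_div_iff₀ (by positivity) (by positivity)]
  have hcard : (0:ℝ) ≤ ((D ∩ Set.Icc (-(n:ℤ)) (n:ℤ)).ncard : ℝ) := Nat.cast_nonneg _
  nlinarith [Nat.cast_nonneg (α := ℝ) S.ncard]

end Bounds

theorem stmt_4 (S : Set ℤ) (hS : S.Finite) (h0 : 0 ∉ S)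
    (heff : ∃ D : Set ℤ, EffDominating S D) :
    dominationRatio S = 1 / ((S.ncard : ℝ) + 1) := by
  classical
  obtain ⟨M, hM⟩ : ∃ M : ℕ, ∀ s ∈ S, |s| ≤ (M : ℤ) := by
    refine ⟨hS.toFinset.sup Int.natAbs, fun s hs => ?_⟩
    rw [Int.abs_eq_natAbs]
    exact_mod_cast Finset.le_sup (f := Int.natAbs) (hS.mem_toFinset.mpr hs)
  have hk0 : (0:ℝ) ≤ (S.ncard : ℝ) := Nat.cast_nonneg _
  have htb := tend_aux (1 - 2 * M) (S.ncard : ℝ) hk0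
  have htu := tend_aux (2 * M + 1) (S.ncard : ℝ) hk0
  -- lower bound on density of any dominating set
  have lowdens : ∀ D : Set ℤ, Dominating S D → 1 / ((S.ncard:ℝ) + 1) ≤ lowerDensity D := by
    intro D hD
    have hble : ∀ᶠ n : ℕ in atTop,
        (2 * (n:ℝ) + (1 - 2 * M)) / (((S.ncard:ℝ) + 1) * (2 * (n:ℝ) + 1)) ≤ fseq D n := by
      filter_upwards [Filter.eventually_ge_atTop M] with n hn
      exact fseq_lower hS h0 hM hD hn
    have hcob : Filter.IsCoboundedUnder (· ≥ ·) Filter.atTop (fseq D) :=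
      Filter.IsBoundedUnder.isCoboundedUnder_ge
        ⟨1, Filter.eventually_map.mpr (Filter.Eventually.of_forall (fseq_le_one D))⟩
    have hbdd : Filter.IsBoundedUnder (· ≥ ·) Filter.atTop
        (fun n : ℕ => (2 * (n:ℝ) + (1 - 2 * M)) / (((S.ncard:ℝ) + 1) * (2 * (n:ℝ) + 1))) :=
      htb.isBoundedUnder_ge
    rw [lowerDensity_eq]
    calc 1 / ((S.ncard:ℝ) + 1)
        = Filter.liminf (fun n : ℕ =>
            (2 * (n:ℝ) + (1 - 2 * M)) / (((S.ncard:ℝ) + 1) * (2 * (n:ℝ) + 1)))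
          Filter.atTop := htb.liminf_eq.symm
      _ ≤ Filter.liminf (fseq D) Filter.atTop := Filter.liminf_le_liminf hble hbdd hcob
  obtain ⟨D, hD⟩ := heff
  have hDdom : Dominating S D := by
    intro m
    obtain ⟨u, ⟨hu, hcase⟩, _⟩ := hD m
    rcases hcase with rfl | h
    · exact Or.inl hu
    · exact Or.inr ⟨u, hu, m - u, h, by ring⟩
  have heffdens : lowerDensity D = 1 / ((S.ncard:ℝ) + 1) := by
    have hble : ∀ᶠ n : ℕ in atTop,
        (2 * (n:ℝ) + (1 - 2 * M)) / (((S.ncard:ℝ) + 1) * (2 * (n:ℝ) + 1)) ≤ fseq D n := by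
      filter_upwards [Filter.eventually_ge_atTop M] with n hn
      exact fseq_lower hS h0 hM hDdom hn
    have hfl : Filter.Tendsto (fseq D) Filter.atTop (nhds (1 / ((S.ncard:ℝ) + 1))) :=
      tendsto_of_tendsto_of_tendsto_of_le_of_le' htb htu hble
        (Filter.Eventually.of_forall (fseq_upper hS h0 hM hD))
    rw [lowerDensity_eq]
    exact hfl.liminf_eq
  have hmem : (1 : ℝ) / ((S.ncard:ℝ) + 1) ∈ lowerDensity '' {E : Set ℤ | Dominating S E} :=
    ⟨D, hDdom, heffdens⟩
  have hlb : ∀ x ∈ lowerDensity '' {E : Set ℤ | Dominating S E}, 1 / ((S.ncard:ℝ) + 1) ≤ x := by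
    rintro x ⟨E, hE, rfl⟩
    exact lowdens E hE
  rw [dominationRatio]
  exact le_antisymm (csInf_le ⟨1 / ((S.ncard:ℝ) + 1), hlb⟩ hmem) (le_csInf ⟨_, hmem⟩ hlb)
end

section
/- Let S ⊆ ℤ \ {0} be finite with |S| = d. The integer distance digraph Γ(ℤ, S) has an efficient dominating set if and only if its domination ratio equals 1/(d+1). -/
/-
Every `u` dominates the `d + 1` points of `{u} ∪ (u + S)`, so counting in the windows `[-n, n]`
shows that a dominating set has lower density at least `1/(d+1)`, with equality for an efficient
one, whose neighbourhoods are pairwise disjoint.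

Conversely, if the ratio is `1/(d+1)`, there are dominating sets whose counts in large windows
are so close to `(2n+1)/(d+1)` that the points dominated more than once cannot meet each of the
disjoint blocks of length `2k+1` in the window. Translating a block that avoids them to the
origin gives a set dominating every point of `[-k, k]` exactly once. Being uniquely dominated at
`m` only depends on the set near `m`, so by compactness (an ultrafilter limit over `k`) these
sets converge to an efficient dominating set.
-/

open Filter

open Topology Pointwise

theorem Finset.card_add_card_filter_two_le_sum_card_bipartiteAbove {α β : Type*}
    {s : Finset α} {t : Finset β} (r : α → β → Prop) [∀ a b, Decidable (r a b)]
    (h : ∀ b ∈ t, ∃ a ∈ s, r a b) :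
    t.card + (t.filter fun b => 2 ≤ (s.bipartiteBelow r b).card).card
      ≤ ∑ a ∈ s, (t.bipartiteAbove r a).card := by
  rw [Finset.sum_card_bipartiteAbove_eq_sum_card_bipartiteBelow, Finset.card_filter,
    Finset.card_eq_sum_ones t, ← Finset.sum_add_distrib]
  refine Finset.sum_le_sum fun b hb => ?_
  obtain ⟨a, ha, hab⟩ := h b hb
  have : 0 < (s.bipartiteBelow r b).card :=
    Finset.card_pos.mpr ⟨a, Finset.mem_filter.mpr ⟨ha, hab⟩⟩
  split_ifs <;> omega

theorem Finset.exists_disjoint_Ico (B : Finset ℤ) (a : ℤ) (L : ℕ) :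
    ∃ j ≤ B.card, Disjoint B (Finset.Ico (a + j * L) (a + j * L + L)) := by
  rcases L.eq_zero_or_pos with rfl | hL
  · exact ⟨0, Nat.zero_le _, by simp⟩
  obtain ⟨j, hj, hjB⟩ := Finset.exists_mem_notMem_of_card_lt_card
    (s := B.image fun m => ((m - a) / L).toNat) (t := Finset.range (B.card + 1))
    (Finset.card_image_le.trans_lt (by simp))
  refine ⟨j, Nat.lt_succ_iff.mp (Finset.mem_range.mp hj),
    Finset.disjoint_right.mpr fun m hm hmB => hjB (Finset.mem_image.mpr ⟨m, hmB, ?_⟩)⟩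
  rw [Finset.mem_Ico] at hm
  have : (m - a) / L = j :=
    (Int.ediv_eq_iff_of_pos (by exact_mod_cast hL)).mpr ⟨by linarith, by linarith⟩
  simp [this]

theorem exists_set_forall_of_locally_determined {α ι : Type*} (r : ι → ℕ)
    (F : ι → Finset α) (P : ι → Set α → Prop)
    (hP : ∀ i X Y, (∀ a ∈ F i, a ∈ X ↔ a ∈ Y) → P i X → P i Y)
    (h : ∀ k, ∃ X, ∀ i, r i ≤ k → P i X) : ∃ D, ∀ i, P i D := by
  choose X hX using h
  obtain ⟨U, hU⟩ := Ultrafilter.exists_le (atTop : Filter ℕ)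
  set D := {a | ∀ᶠ k in U, a ∈ X k}
  have hagree (a : α) : ∀ᶠ k in U, a ∈ X k ↔ a ∈ D := by
    by_cases ha : a ∈ D
    · exact ha.mono fun k hk => iff_of_true hk ha
    · exact (Ultrafilter.eventually_not.mpr ha).mono fun k hk => iff_of_false hk ha
  refine ⟨D, fun i => ?_⟩
  obtain ⟨k, hk, hrk⟩ := (((eventually_all_finset (F i)).mpr fun a _ => hagree a).and
    (hU (eventually_ge_atTop (r i)))).exists
  exact hP i _ _ hk (hX k i hrk)

def closedNbhd (S : Finset ℤ) (u : ℤ) : Finset ℤ := insert u (u +ᵥ S)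

def UniquelyDominated (S : Finset ℤ) (D : Set ℤ) (m : ℤ) : Prop :=
  ∃! u, u ∈ D ∧ m ∈ closedNbhd S u

open scoped Classical in
noncomputable def window (D : Set ℤ) (n : ℕ) : Finset ℤ :=
  (Finset.Icc (-(n : ℤ)) n).filter (· ∈ D)

noncomputable def windowDensity (D : Set ℤ) (n : ℕ) : ℝ :=
  (window D n).card / (2 * n + 1)

theorem dominating_univ (S : Set ℤ) : Dominating S Set.univ := fun _ => Or.inl trivial

section

variable {S : Finset ℤ} {D : Set ℤ} {M : ℕ}

theorem mem_closedNbhd {u m : ℤ} : m ∈ closedNbhd S u ↔ u = m ∨ m - u ∈ S := by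
  simp only [closedNbhd, Finset.mem_insert, Finset.mem_vadd_finset, vadd_eq_add, eq_comm (a := m)]
  refine or_congr_right ⟨?_, fun h => ⟨m - u, h, by ring⟩⟩
  rintro ⟨s, hs, rfl⟩
  simpa using hs

theorem add_mem_closedNbhd_add {u m : ℤ} (t : ℤ) :
    m + t ∈ closedNbhd S (u + t) ↔ m ∈ closedNbhd S u := by
  simp [mem_closedNbhd]

theorem card_closedNbhd_le (u : ℤ) : (closedNbhd S u).card ≤ S.card + 1 :=
  (Finset.card_insert_le _ _).trans_eq (by rw [Finset.card_vadd_finset])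

theorem card_closedNbhd (h0 : 0 ∉ S) (u : ℤ) : (closedNbhd S u).card = S.card + 1 := by
  rw [closedNbhd, Finset.card_insert_of_notMem, Finset.card_vadd_finset]
  rintro h
  obtain ⟨s, hs, h⟩ := Finset.mem_vadd_finset.mp h
  obtain rfl : s = 0 := by simpa [vadd_eq_add] using h
  exact h0 hs

theorem natAbs_sub_le_of_mem_closedNbhd (hM : ∀ s ∈ S, s.natAbs ≤ M) {u m : ℤ}
    (h : m ∈ closedNbhd S u) : (m - u).natAbs ≤ M := by
  rcases mem_closedNbhd.mp h with rfl | h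
  · simp
  · exact hM _ h

theorem dominating_iff : Dominating ↑S D ↔ ∀ m, ∃ u ∈ D, m ∈ closedNbhd S u := by
  refine forall_congr' fun m => ⟨?_, fun ⟨u, hu, h⟩ => ?_⟩
  · rintro (hm | ⟨u, hu, s, hs, rfl⟩)
    · exact ⟨m, hm, mem_closedNbhd.mpr (Or.inl rfl)⟩
    · exact ⟨u, hu, mem_closedNbhd.mpr (Or.inr (by simpa using hs))⟩
  · rcases mem_closedNbhd.mp h with rfl | h
    · exact Or.inl hu
    · exact Or.inr ⟨u, hu, m - u, h, by ring⟩

theorem effDominating_iff : EffDominating ↑S D ↔ ∀ m, UniquelyDominated S D m := by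
  simp only [EffDominating, UniquelyDominated, mem_closedNbhd, Finset.mem_coe]

theorem dominating_of_forall_uniquelyDominated (hD : ∀ m, UniquelyDominated S D m) :
    Dominating ↑S D :=
  dominating_iff.mpr fun m => (hD m).exists

theorem uniquelyDominated_preimage_add (t m : ℤ) :
    UniquelyDominated S ((· + t) ⁻¹' D) m ↔ UniquelyDominated S D (m + t) :=
  (Equiv.addRight t).existsUnique_congr fun u => by
    simp [add_mem_closedNbhd_add]

theorem mem_window {n : ℕ} {u : ℤ} : u ∈ window D n ↔ u ∈ D ∧ u.natAbs ≤ n := by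
  simp only [window, Finset.mem_filter, Finset.mem_Icc]
  exact and_comm.trans (and_congr_right fun _ => by omega)

theorem ncard_inter_Icc (D : Set ℤ) (n : ℕ) :
    (D ∩ Set.Icc (-(n : ℤ)) n).ncard = (window D n).card := by
  rw [← Set.ncard_coe_finset]
  congr 1
  ext u
  simp only [Set.mem_inter_iff, Set.mem_Icc, Finset.mem_coe, mem_window]
  exact and_congr_right fun _ => by omega

theorem mem_window_of_mem_closedNbhd (hM : ∀ s ∈ S, s.natAbs ≤ M) {n : ℕ} {u m : ℤ}
    (hu : u ∈ D) (hm : m.natAbs + M ≤ n) (h : m ∈ closedNbhd S u) : u ∈ window D n := by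
  have := natAbs_sub_le_of_mem_closedNbhd hM h
  exact mem_window.mpr ⟨hu, by omega⟩

theorem uniquelyDominated_congr (hM : ∀ s ∈ S, s.natAbs ≤ M) {X Y : Set ℤ} {m : ℤ}
    (h : ∀ u ∈ Finset.Icc (m - M) (m + M), u ∈ X ↔ u ∈ Y) :
    UniquelyDominated S X m ↔ UniquelyDominated S Y m := by
  refine existsUnique_congr fun u => and_congr_left fun hmu => h u ?_
  have := natAbs_sub_le_of_mem_closedNbhd hM hmu
  rw [Finset.mem_Icc]
  omega

theorem uniquelyDominated_iff_card_eq_one (hM : ∀ s ∈ S, s.natAbs ≤ M) {n : ℕ} {m : ℤ}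
    (hm : m.natAbs + M ≤ n) :
    UniquelyDominated S D m ↔ ((window D n).filter (m ∈ closedNbhd S ·)).card = 1 := by
  rw [Finset.card_eq_one_iff_existsUnique, UniquelyDominated]
  refine existsUnique_congr fun u => ⟨fun ⟨hu, h⟩ => ?_, fun h => ?_⟩
  · exact Finset.mem_filter.mpr ⟨mem_window_of_mem_closedNbhd hM hu hm h, h⟩
  · obtain ⟨hu, h⟩ := Finset.mem_filter.mp h
    exact ⟨(mem_window.mp hu).1, h⟩

open scoped Classical in
theorem two_mul_add_one_add_card_not_uniquelyDominated_le (hM : ∀ s ∈ S, s.natAbs ≤ M)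
    (hD : Dominating ↑S D) (n : ℕ) :
    2 * n + 1 + ((Finset.Icc (-(n : ℤ) + M) (n - M)).filter (¬ UniquelyDominated S D ·)).card
      ≤ (S.card + 1) * (window D n).card + 2 * M := by
  set W := Finset.Icc (-(n : ℤ) + M) (n - M)
  have hW : ∀ m ∈ W, m.natAbs + M ≤ n := fun m hm => by
    rw [Finset.mem_Icc] at hm
    omega
  have hdom : ∀ m ∈ W, ∃ u ∈ window D n, m ∈ closedNbhd S u := fun m hm => by
    obtain ⟨u, hu, h⟩ := dominating_iff.mp hD m
    exact ⟨u, mem_window_of_mem_closedNbhd hM hu (hW m hm) h, h⟩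
  have hcount := Finset.card_add_card_filter_two_le_sum_card_bipartiteAbove
    (fun u m => m ∈ closedNbhd S u) hdom
  simp only [Finset.bipartiteBelow, Finset.bipartiteAbove] at hcount
  have hbad : (W.filter (¬ UniquelyDominated S D ·)).card
      ≤ (W.filter fun m => 2 ≤ ((window D n).filter (m ∈ closedNbhd S ·)).card).card := by
    refine Finset.card_le_card fun m hm => ?_
    obtain ⟨hmW, hm⟩ := Finset.mem_filter.mp hm
    rw [uniquelyDominated_iff_card_eq_one hM (hW m hmW)] at hm
    obtain ⟨u, hu, h⟩ := hdom m hmW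
    have : 0 < ((window D n).filter (m ∈ closedNbhd S ·)).card :=
      Finset.card_pos.mpr ⟨u, Finset.mem_filter.mpr ⟨hu, h⟩⟩
    exact Finset.mem_filter.mpr ⟨hmW, by omega⟩
  have hnbhd : ∑ u ∈ window D n, (W.filter (· ∈ closedNbhd S u)).card
      ≤ (S.card + 1) * (window D n).card := by
    rw [mul_comm, ← smul_eq_mul, ← Finset.sum_const]
    exact Finset.sum_le_sum fun u _ =>
      (Finset.card_le_card fun m hm => (Finset.mem_filter.mp hm).2).trans (card_closedNbhd_le u)
  have hWcard : 2 * n + 1 ≤ W.card + 2 * M := by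
    rw [Int.card_Icc]
    omega
  omega

theorem card_add_one_mul_card_window_le (h0 : 0 ∉ S) (hM : ∀ s ∈ S, s.natAbs ≤ M)
    (hD : ∀ m, UniquelyDominated S D m) (n : ℕ) :
    (S.card + 1) * (window D n).card ≤ 2 * n + 1 + 2 * M := by
  have hdisj : (window D n : Set ℤ).PairwiseDisjoint (closedNbhd S) := fun u hu v hv huv =>
    Finset.disjoint_left.mpr fun m hmu hmv =>
      huv ((hD m).unique ⟨(mem_window.mp hu).1, hmu⟩ ⟨(mem_window.mp hv).1, hmv⟩)
  have hsub : (window D n).biUnion (closedNbhd S) ⊆ Finset.Icc (-(n : ℤ) - M) (n + M) := by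
    intro m hm
    obtain ⟨u, hu, hmu⟩ := Finset.mem_biUnion.mp hm
    have := natAbs_sub_le_of_mem_closedNbhd hM hmu
    have := (mem_window.mp hu).2
    rw [Finset.mem_Icc]
    omega
  calc (S.card + 1) * (window D n).card
      = ((window D n).biUnion (closedNbhd S)).card := by
        rw [Finset.card_biUnion hdisj, Finset.sum_congr rfl fun u _ => card_closedNbhd h0 u,
          Finset.sum_const, smul_eq_mul, mul_comm]
    _ ≤ (Finset.Icc (-(n : ℤ) - M) (n + M)).card := Finset.card_le_card hsub
    _ = 2 * n + 1 + 2 * M := by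
        rw [Int.card_Icc]
        omega

theorem lowerDensity_eq_liminf (D : Set ℤ) :
    lowerDensity D = liminf (windowDensity D) atTop := by
  simp only [lowerDensity, ncard_inter_Icc]
  rfl

theorem windowDensity_le_one (D : Set ℤ) (n : ℕ) : windowDensity D n ≤ 1 := by
  have hsub : window D n ⊆ Finset.Icc (-(n : ℤ)) n := fun u hu => by
    have := (mem_window.mp hu).2
    rw [Finset.mem_Icc]
    omega
  have : (window D n).card ≤ 2 * n + 1 :=
    (Finset.card_le_card hsub).trans_eq (by rw [Int.card_Icc]; omega)
  rw [windowDensity, div_le_one (by positivity)]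
  exact_mod_cast this

theorem tendsto_add_div_mul_two_mul_add_one (a c : ℝ) :
    Tendsto (fun n : ℕ => (2 * n + 1 + a) / (c * (2 * n + 1))) atTop (𝓝 (1 / c)) := by
  have hlin : Tendsto (fun n : ℕ => 2 * (n : ℝ) + 1) atTop atTop :=
    tendsto_atTop_add_const_right _ 1 (tendsto_natCast_atTop_atTop.const_mul_atTop two_pos)
  have := ((tendsto_const_nhds (x := (1 : ℝ))).add
    ((tendsto_const_nhds (x := a)).div_atTop hlin)).div_const c
  rw [add_zero] at this
  refine this.congr fun n => ?_
  field_simp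

theorem le_windowDensity (hM : ∀ s ∈ S, s.natAbs ≤ M) (hD : Dominating ↑S D) (n : ℕ) :
    (2 * n + 1 + -(2 * M : ℝ)) / ((S.card + 1) * (2 * n + 1)) ≤ windowDensity D n := by
  have := two_mul_add_one_add_card_not_uniquelyDominated_le hM hD n
  have hcount : (2 * n + 1 : ℝ) ≤ (S.card + 1) * (window D n).card + 2 * M := by
    exact_mod_cast this.trans' (Nat.le_add_right _ _)
  rw [windowDensity, div_le_div_iff₀ (by positivity) (by positivity)]
  nlinarith

theorem windowDensity_le (h0 : 0 ∉ S) (hM : ∀ s ∈ S, s.natAbs ≤ M)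
    (hD : ∀ m, UniquelyDominated S D m) (n : ℕ) :
    windowDensity D n ≤ (2 * n + 1 + (2 * M : ℝ)) / ((S.card + 1) * (2 * n + 1)) := by
  have hcount : ((S.card + 1) * (window D n).card : ℝ) ≤ 2 * n + 1 + 2 * M := by
    exact_mod_cast card_add_one_mul_card_window_le h0 hM hD n
  rw [windowDensity, div_le_div_iff₀ (by positivity) (by positivity)]
  nlinarith

theorem one_div_card_add_one_le_lowerDensity (hM : ∀ s ∈ S, s.natAbs ≤ M)
    (hD : Dominating ↑S D) :
    1 / ((S.card : ℝ) + 1) ≤ lowerDensity D := by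
  have hlim := tendsto_add_div_mul_two_mul_add_one (-(2 * M)) ((S.card : ℝ) + 1)
  rw [lowerDensity_eq_liminf, ← hlim.liminf_eq]
  exact liminf_le_liminf (Eventually.of_forall (le_windowDensity hM hD)) hlim.isBoundedUnder_ge
    (isCoboundedUnder_ge_of_le atTop (windowDensity_le_one D))

theorem lowerDensity_eq_one_div_card_add_one (h0 : 0 ∉ S) (hM : ∀ s ∈ S, s.natAbs ≤ M)
    (hD : ∀ m, UniquelyDominated S D m) :
    lowerDensity D = 1 / ((S.card : ℝ) + 1) := by
  rw [lowerDensity_eq_liminf]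
  refine Tendsto.liminf_eq (tendsto_of_tendsto_of_tendsto_of_le_of_le
    (tendsto_add_div_mul_two_mul_add_one _ _) (tendsto_add_div_mul_two_mul_add_one _ _)
    (le_windowDensity hM (dominating_of_forall_uniquelyDominated hD)) (windowDensity_le h0 hM hD))

theorem one_div_card_add_one_mem_lowerBounds (hM : ∀ s ∈ S, s.natAbs ≤ M) :
    1 / ((S.card : ℝ) + 1) ∈ lowerBounds (lowerDensity '' {D | Dominating ↑S D}) :=
  fun _ ⟨_, hD, hb⟩ => hb ▸ one_div_card_add_one_le_lowerDensity hM hD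

theorem dominationRatio_eq_of_forall_uniquelyDominated (h0 : 0 ∉ S)
    (hM : ∀ s ∈ S, s.natAbs ≤ M) (hD : ∀ m, UniquelyDominated S D m) :
    dominationRatio ↑S = 1 / ((S.card : ℝ) + 1) := by
  refine le_antisymm ?_ ?_
  · rw [← lowerDensity_eq_one_div_card_add_one h0 hM hD]
    exact csInf_le ⟨_, one_div_card_add_one_mem_lowerBounds hM⟩
      ⟨D, dominating_of_forall_uniquelyDominated hD, rfl⟩
  · exact le_csInf ⟨_, Set.univ, dominating_univ _, rfl⟩
      (one_div_card_add_one_mem_lowerBounds hM)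

end

theorem exists_dominating_windowDensity_lt (S : Set ℤ) {ε : ℝ} (hε : 0 < ε) (N : ℕ) :
    ∃ D, Dominating S D ∧ ∃ n ≥ N, windowDensity D n < dominationRatio S + ε := by
  obtain ⟨_, ⟨D, hD, rfl⟩, hlt⟩ :=
    exists_lt_of_csInf_lt (s := lowerDensity '' {D | Dominating S D})
      ⟨_, Set.univ, dominating_univ _, rfl⟩ (lt_add_of_pos_right (dominationRatio S) hε)
  rw [lowerDensity_eq_liminf] at hlt
  obtain ⟨n, hn, hlt⟩ := frequently_atTop.mp (frequently_lt_of_liminf_lt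
    (isCoboundedUnder_ge_of_le atTop (windowDensity_le_one D)) hlt) N
  exact ⟨D, hD, n, hn, hlt⟩

open scoped Classical in
theorem exists_translate_uniquelyDominated {S : Finset ℤ} (D : Set ℤ) (a b : ℤ) (k : ℕ)
    (hfit : (((Finset.Icc a b).filter (¬ UniquelyDominated S D ·)).card + 1 : ℤ) * (2 * k + 1)
      ≤ b + 1 - a) :
    ∃ t : ℤ, ∀ m : ℤ, m.natAbs ≤ k → UniquelyDominated S ((· + t) ⁻¹' D) m := by
  set B := (Finset.Icc a b).filter (¬ UniquelyDominated S D ·)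
  obtain ⟨j, hj, hdisj⟩ := B.exists_disjoint_Ico a (2 * k + 1)
  have hjL : ((j : ℤ) + 1) * (2 * k + 1) ≤ b + 1 - a :=
    le_trans (by gcongr) hfit
  refine ⟨a + j * (2 * k + 1) + k, fun m hm => ?_⟩
  rw [uniquelyDominated_preimage_add]
  by_contra hnot
  have hmk : -(k : ℤ) ≤ m ∧ m ≤ k := by omega
  have : 0 ≤ (j : ℤ) * (2 * k + 1) := by positivity
  refine Finset.disjoint_left.mp hdisj
    (Finset.mem_filter.mpr ⟨Finset.mem_Icc.mpr ⟨?_, ?_⟩, hnot⟩)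
    (Finset.mem_Ico.mpr ⟨?_, ?_⟩)
    <;> push_cast <;> linarith

open scoped Classical in
theorem exists_uniquelyDominated_of_natAbs_le {S : Finset ℤ} {M : ℕ}
    (hM : ∀ s ∈ S, s.natAbs ≤ M) (hratio : dominationRatio ↑S ≤ 1 / ((S.card : ℝ) + 1))
    (k : ℕ) : ∃ X : Set ℤ, ∀ m : ℤ, m.natAbs ≤ k → UniquelyDominated S X m := by
  set L := 2 * k + 1
  -- `ε` is chosen so that fewer than `(2n+1)/(2L) + 2M` points of the window are not uniquely
  -- dominated: too few to meet all the disjoint blocks of length `L` inside it.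
  obtain ⟨D, hD, n, hn, hdens⟩ := exists_dominating_windowDensity_lt (S : Set ℤ)
    (ε := 1 / (2 * L * (S.card + 1))) (by positivity) (2 * L * M + L + 2 * M)
  set B := (Finset.Icc (-(n : ℤ) + M) (n - M)).filter (¬ UniquelyDominated S D ·)
  have hcount : 2 * n + 1 + B.card ≤ (S.card + 1) * (window D n).card + 2 * M :=
    two_mul_add_one_add_card_not_uniquelyDominated_le hM hD n
  have hsparse : (window D n).card * (2 * L * (S.card + 1)) < (2 * L + 1) * (2 * n + 1) := by
    have h : windowDensity D n < 1 / ((S.card : ℝ) + 1) + 1 / (2 * L * (S.card + 1)) := by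
      linarith
    have hsum : 1 / ((S.card : ℝ) + 1) + 1 / (2 * L * (S.card + 1))
        = (2 * L + 1) / (2 * L * (S.card + 1)) := by
      have : (0 : ℝ) < L := by positivity
      field_simp
    rw [hsum, windowDensity, div_lt_div_iff₀ (by positivity) (by positivity)] at h
    exact_mod_cast h
  have hfit : (B.card + 1) * L + 2 * M ≤ 2 * n + 1 := by nlinarith
  obtain ⟨t, ht⟩ := exists_translate_uniquelyDominated D (-(n : ℤ) + M) (n - M) k (by
    push_cast [L] at hfit ⊢
    linarith)
  exact ⟨_, ht⟩

theorem stmt_7 (S : Set ℤ) (d : ℕ) (hS : S.Finite) (h0 : 0 ∉ S) (hcard : S.ncard = d) :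
    (∃ D : Set ℤ, EffDominating S D) ↔ dominationRatio S = 1 / ((d : ℝ) + 1) := by
  obtain ⟨S, rfl⟩ := hS.exists_finset_coe
  rw [Set.ncard_coe_finset] at hcard
  subst hcard
  obtain ⟨M, hM⟩ : ∃ M, ∀ s ∈ S, s.natAbs ≤ M :=
    ⟨S.sup Int.natAbs, fun s hs => Finset.le_sup hs⟩
  simp_rw [effDominating_iff]
  refine ⟨fun ⟨D, hD⟩ => dominationRatio_eq_of_forall_uniquelyDominated h0 hM hD,
    fun hratio => ?_⟩
  exact exists_set_forall_of_locally_determined Int.natAbs (fun m => Finset.Icc (m - M) (m + M))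
    (fun m X => UniquelyDominated S X m) (fun _ _ _ hXY => (uniquelyDominated_congr hM hXY).mp)
    (exists_uniquelyDominated_of_natAbs_le hM hratio.le)
end

section
/- Let S ⊆ ℤ \ {0} be finite, and let D be a periodic dominating set of Γ(ℤ, S) with period p such that γ̄(ℤ, S) = δ(D) = |D ∩ [1,p]|/p. Then the image of D ∩ [1,p] in ℤ_p is a minimum dominating set of the circulant digraph Γ(ℤ_p, S_p), where S_p is the set of residues mod p of elements of S; consequently γ(ℤ_p, S_p) = γ̄(ℤ, S)·p. -/
open Filter

/-- `D'` is a dominating set of the circulant digraph `Γ(ℤ_p, S')`. -/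
def DominatingC {p : ℕ} (S' D' : Set (ZMod p)) : Prop :=
  ∀ m : ZMod p, m ∈ D' ∨ ∃ u ∈ D', ∃ s ∈ S', m = u + s

/-! Reduction mod `p` sends dominating sets of `Γ(ℤ,S)` to dominating sets of `Γ(ℤ_p,S_p)`, and
pulling back sends them the other way. The pull-back of any `D'' ⊆ ℤ_p` has density at most
`|D''| / p`, so minimality of `δ(D) = |D ∩ [1,p]| / p` forces `|D ∩ [1,p]| ≤ |D''|`. Since `D` is
periodic, its image in `ℤ_p` is the injective image of `D ∩ [1,p]`. -/

section Density

lemma lowerDensity_nonneg (D : Set ℤ) : 0 ≤ lowerDensity D := by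
  have hle_one : ∀ n : ℕ,
      ((D ∩ Set.Icc (-(n : ℤ)) n).ncard : ℝ) / (2 * (n : ℝ) + 1) ≤ 1 := by
    intro n
    rw [div_le_one (by positivity)]
    have hcard : (D ∩ Set.Icc (-(n : ℤ)) n).ncard ≤ 2 * n + 1 := by
      calc (D ∩ Set.Icc (-(n : ℤ)) n).ncard
          ≤ (Set.Icc (-(n : ℤ)) n).ncard :=
            Set.ncard_le_ncard Set.inter_subset_right (Set.finite_Icc _ _)
        _ = 2 * n + 1 := by
            rw [← Finset.coe_Icc, Set.ncard_coe_finset, Int.card_Icc]; omega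
    exact_mod_cast hcard
  exact le_liminf_of_le (isCoboundedUnder_ge_of_le _ hle_one)
    (Eventually.of_forall fun n => by positivity)

lemma dominationRatio_le_lowerDensity {S D : Set ℤ} (hD : Dominating S D) :
    dominationRatio S ≤ lowerDensity D :=
  csInf_le ⟨0, by rintro _ ⟨D', -, rfl⟩; exact lowerDensity_nonneg D'⟩ ⟨D, hD, rfl⟩

variable {p : ℕ} [NeZero p]

/-- An integer in `[a, a + L]` is determined by its residue mod `p` and by its block
`(x - a) / p`, which takes at most `L / p + 1` values. -/
lemma ncard_preimage_intCast_inter_Icc_le (D' : Set (ZMod p)) (a : ℤ) (L : ℕ) :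
    ((fun x : ℤ => (x : ZMod p)) ⁻¹' D' ∩ Set.Icc a (a + L)).ncard
      ≤ D'.ncard * (L / p + 1) := by
  have hp : (0 : ℤ) < p := by exact_mod_cast Nat.pos_of_neZero p
  let block : ℤ → ℕ := fun x => ((x - a) / p).toNat
  have hblock : ∀ x ∈ Set.Icc a (a + L), (block x : ℤ) = (x - a) / p := fun x hx =>
    Int.toNat_of_nonneg (Int.ediv_nonneg (by linarith [hx.1]) hp.le)
  calc _ ≤ (D' ×ˢ (Finset.range (L / p + 1) : Set ℕ)).ncard := by
        refine Set.ncard_le_ncard_of_injOn (fun x => ((x : ZMod p), block x)) ?_ ?_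
        · rintro x ⟨hxD, hx⟩
          refine ⟨hxD, Finset.mem_coe.2 (Finset.mem_range_succ_iff.2 ?_)⟩
          have : (x - a) / p ≤ (L : ℤ) / p := Int.ediv_le_ediv hp (by linarith [hx.2])
          rw [← Int.natCast_div, ← hblock x hx] at this
          exact_mod_cast this
        · rintro x ⟨-, hx⟩ y ⟨-, hy⟩ hxy
          simp only [Prod.mk.injEq] at hxy
          have hdiv : (x - a) / p = (y - a) / p := by
            rw [← hblock x hx, ← hblock y hy, hxy.2]
          have hmod : (x - a) % p = (y - a) % p := by
            rw [← ZMod.intCast_eq_intCast_iff']; push_cast; rw [hxy.1]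
          have hx' := Int.emod_add_mul_ediv (x - a) p
          rw [hmod, hdiv] at hx'
          linarith [Int.emod_add_mul_ediv (y - a) p]
    _ = D'.ncard * (L / p + 1) := by
        rw [Set.ncard_prod, Set.ncard_coe_finset, Finset.card_range]

/-- The `n`-th ratio is at most `|D'| / p + |D'| / (2n + 1)`. -/
lemma lowerDensity_preimage_intCast_le (D' : Set (ZMod p)) :
    lowerDensity ((fun x : ℤ => (x : ZMod p)) ⁻¹' D') ≤ (D'.ncard : ℝ) / p := by
  set E := (fun x : ℤ => (x : ZMod p)) ⁻¹' D'
  set k : ℝ := (D'.ncard : ℝ) with hk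
  have hp : (0 : ℝ) < p := by exact_mod_cast Nat.pos_of_neZero p
  have hbound : ∀ n : ℕ, ((E ∩ Set.Icc (-(n : ℤ)) n).ncard : ℝ) / (2 * n + 1)
      ≤ k / p + k / (2 * n + 1) := by
    intro n
    have hcount := ncard_preimage_intCast_inter_Icc_le D' (-(n : ℤ)) (2 * n)
    rw [show -(n : ℤ) + ((2 * n : ℕ) : ℤ) = n by push_cast; ring] at hcount
    replace hcount : ((E ∩ Set.Icc (-(n : ℤ)) n).ncard : ℝ) ≤ k * ((2 * n / p : ℕ) + 1) := by
      rw [hk]; exact_mod_cast hcount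
    have hblocks : ((2 * n / p : ℕ) : ℝ) * p ≤ 2 * n := by
      exact_mod_cast Nat.div_mul_le_self (2 * n) p
    have hn : (0 : ℝ) < 2 * n + 1 := by positivity
    have hk0 : 0 ≤ k := Nat.cast_nonneg _
    rw [div_add_div _ _ hp.ne' hn.ne', div_le_div_iff₀ hn (by positivity)]
    calc ((E ∩ Set.Icc (-(n : ℤ)) n).ncard : ℝ) * (p * (2 * n + 1))
        ≤ (k * ((2 * n / p : ℕ) + 1)) * (p * (2 * n + 1)) := by gcongr
      _ ≤ (k * (2 * n + 1) + p * k) * (2 * n + 1) := by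
          nlinarith [mul_le_mul_of_nonneg_left hblocks (mul_nonneg hk0 hn.le)]
  have hlim : Tendsto (fun n : ℕ => k / p + k / (2 * n + 1)) atTop (nhds (k / p + 0)) :=
    tendsto_const_nhds.add (tendsto_const_nhds.div_atTop
      (tendsto_atTop_add_const_right _ _
        (tendsto_natCast_atTop_atTop.const_mul_atTop two_pos)))
  calc lowerDensity E
      ≤ liminf (fun n : ℕ => k / p + k / (2 * n + 1)) atTop :=
        liminf_le_liminf (Eventually.of_forall hbound)
          (isBoundedUnder_of ⟨0, fun n => by positivity⟩)
          hlim.isBoundedUnder_le.isCoboundedUnder_ge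
    _ = k / p := by rw [hlim.liminf_eq, add_zero]

end Density

section Reduction

variable {p : ℕ}

lemma ZMod.intCast_injOn_Ico (a : ℤ) :
    Set.InjOn (fun x : ℤ => (x : ZMod p)) (Set.Ico a (a + p)) := by
  intro x hx y hy hxy
  have hdvd := (ZMod.intCast_eq_intCast_iff_dvd_sub x y p).1 hxy
  have hzero : y - x = 0 := Int.eq_zero_of_abs_lt_dvd hdvd <| by
    rw [abs_lt]; constructor <;> linarith [hx.1, hx.2, hy.1, hy.2]
  linarith

lemma ZMod.exists_mem_Icc_intCast_eq (hp : 0 < p) (x : ℤ) :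
    ∃ y ∈ Set.Icc (1 : ℤ) p, (y : ZMod p) = x := by
  have hp' : (0 : ℤ) < p := by exact_mod_cast hp
  refine ⟨(x - 1) % p + 1, ⟨?_, ?_⟩, ?_⟩
  · linarith [Int.emod_nonneg (x - 1) hp'.ne']
  · linarith [Int.emod_lt_of_pos (x - 1) hp']
  · rw [Int.cast_add, ZMod.intCast_mod]; push_cast; ring

lemma mem_iff_mem_of_intCast_eq {D : Set ℤ} (hper : ∀ x : ℤ, x ∈ D ↔ x + p ∈ D) {x y : ℤ}
    (hxy : (x : ZMod p) = y) : x ∈ D ↔ y ∈ D := by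
  have hperiodic : Function.Periodic (· ∈ D) (p : ℤ) := fun x => propext (hper x).symm
  obtain ⟨k, hk⟩ := (ZMod.intCast_eq_intCast_iff_dvd_sub x y p).1 hxy
  rw [show y = x + k * p by linarith]
  exact (eq_iff_iff.1 (hperiodic.int_mul k x)).symm

lemma intCast_image_inter_Icc_eq_of_periodic (hp : 0 < p) {D : Set ℤ}
    (hper : ∀ x : ℤ, x ∈ D ↔ x + p ∈ D) :
    (fun x : ℤ => (x : ZMod p)) '' (D ∩ Set.Icc 1 (p : ℤ)) = (fun x : ℤ => (x : ZMod p)) '' D := by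
  refine (Set.image_mono Set.inter_subset_left).antisymm ?_
  rintro _ ⟨x, hx, rfl⟩
  obtain ⟨y, hy, hyx⟩ := ZMod.exists_mem_Icc_intCast_eq hp x
  exact ⟨y, ⟨(mem_iff_mem_of_intCast_eq hper hyx).2 hx, hy⟩, hyx⟩

lemma Dominating.intCast_image {S D : Set ℤ} (hD : Dominating S D) :
    DominatingC ((fun s : ℤ => (s : ZMod p)) '' S) ((fun x : ℤ => (x : ZMod p)) '' D) := by
  intro m
  obtain ⟨x, rfl⟩ := ZMod.intCast_surjective m
  rcases hD x with hx | ⟨u, hu, s, hs, rfl⟩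
  · exact Or.inl ⟨x, hx, rfl⟩
  · exact Or.inr ⟨u, ⟨u, hu, rfl⟩, s, ⟨s, hs, rfl⟩, Int.cast_add u s⟩

lemma DominatingC.intCast_preimage {S : Set ℤ} {D' : Set (ZMod p)}
    (hD' : DominatingC ((fun s : ℤ => (s : ZMod p)) '' S) D') :
    Dominating S ((fun x : ℤ => (x : ZMod p)) ⁻¹' D') := by
  intro m
  rcases hD' m with hm | ⟨u, hu, _, ⟨s, hs, rfl⟩, hmu⟩
  · exact Or.inl hm
  · refine Or.inr ⟨m - s, ?_, s, hs, by ring⟩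
    show ((m - s : ℤ) : ZMod p) ∈ D'
    rwa [Int.cast_sub, hmu, add_sub_cancel_right]

end Reduction

theorem stmt_8_general (S : Set ℤ)
    (D : Set ℤ) (p : ℕ) (hp : 0 < p)
    (hDdom : Dominating S D)
    (hper : ∀ x : ℤ, x ∈ D ↔ x + p ∈ D)
    (hmin : dominationRatio S = lowerDensity D)
    (hval : lowerDensity D = ((D ∩ Set.Icc 1 (p : ℤ)).ncard : ℝ) / (p : ℝ)) :
    DominatingC ((fun s : ℤ => (s : ZMod p)) '' S)
        ((fun x : ℤ => (x : ZMod p)) '' (D ∩ Set.Icc 1 (p : ℤ))) ∧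
      (∀ D'' : Set (ZMod p), DominatingC ((fun s : ℤ => (s : ZMod p)) '' S) D'' →
        ((fun x : ℤ => (x : ZMod p)) '' (D ∩ Set.Icc 1 (p : ℤ))).ncard ≤ D''.ncard) ∧
      ((((fun x : ℤ => (x : ZMod p)) '' (D ∩ Set.Icc 1 (p : ℤ))).ncard : ℝ) =
        dominationRatio S * p) := by
  have : NeZero p := ⟨hp.ne'⟩
  have hp' : (0 : ℝ) < p := by exact_mod_cast hp
  have hsub : D ∩ Set.Icc 1 (p : ℤ) ⊆ Set.Ico 1 (1 + p) := fun x hx =>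
    ⟨hx.2.1, by linarith [hx.2.2]⟩
  have hcard : ((fun x : ℤ => (x : ZMod p)) '' (D ∩ Set.Icc 1 (p : ℤ))).ncard
      = (D ∩ Set.Icc 1 (p : ℤ)).ncard :=
    ((ZMod.intCast_injOn_Ico 1).mono hsub).ncard_image
  refine ⟨?_, fun D'' hD'' => ?_, ?_⟩
  · rw [intCast_image_inter_Icc_eq_of_periodic hp hper]
    exact hDdom.intCast_image
  · have h := (dominationRatio_le_lowerDensity hD''.intCast_preimage).trans
      (lowerDensity_preimage_intCast_le D'')
    rw [hmin, hval, div_le_div_iff_of_pos_right hp'] at h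
    rw [hcard]
    exact_mod_cast h
  · rw [hcard, hmin, hval, div_mul_cancel₀ _ hp'.ne']

theorem stmt_8 (S : Set ℤ) (hS : S.Finite) (h0 : 0 ∉ S)
    (D : Set ℤ) (p : ℕ) (hp : 0 < p)
    (hDdom : Dominating S D)
    (hper : ∀ x : ℤ, x ∈ D ↔ x + p ∈ D)
    (hmin : dominationRatio S = lowerDensity D)
    (hval : lowerDensity D = ((D ∩ Set.Icc 1 (p : ℤ)).ncard : ℝ) / (p : ℝ)) :
    DominatingC ((fun s : ℤ => (s : ZMod p)) '' S)
        ((fun x : ℤ => (x : ZMod p)) '' (D ∩ Set.Icc 1 (p : ℤ))) ∧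
      (∀ D'' : Set (ZMod p), DominatingC ((fun s : ℤ => (s : ZMod p)) '' S) D'' →
        ((fun x : ℤ => (x : ZMod p)) '' (D ∩ Set.Icc 1 (p : ℤ))).ncard ≤ D''.ncard) ∧
      ((((fun x : ℤ => (x : ZMod p)) '' (D ∩ Set.Icc 1 (p : ℤ))).ncard : ℝ) =
        dominationRatio S * p) :=
  stmt_8_general S D p hp hDdom hper hmin hval
end
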